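/- arXiv:2507.16599 — 4 statements merged into one kernel-verified Lean document; each statement's English description precedes it below -/
import Mathlib

section
/- For every real number R > 0 and every dimension d ≥ 2, there exists λ ∈ [R-1, R+1] with λ² ∈ ℕ such that the number of lattice points k ∈ ℤ^d with |k| = λ is at least c_d · λ^{d-2} for a constant c_d > 0 depending only on d. -/
/-!
Fix `N = ⌊R⌋₊` and `M = ⌊N / (d-1)⌋`. For each `u ∈ {0, …, M}^(d-1)` we have `∑ uᵢ² ≤ N²`, so a
first coordinate `a` can be chosen with `a² + ∑ uᵢ² ∈ (N², (N+1)²]`. This puts `(M+1)^(d-1)`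
distinct lattice points into `2N + 1` spheres whose radii lie in `(N, N+1]`, and by pigeonhole
one of them carries at least `(M+1)^(d-1) / (2N+1)` points. Since `(d-1)(M+1) ≥ N+1`, this is
at least `(N+1)^(d-2) / (2 (d-1)^(d-1))`.
-/

open Finset

lemma finite_sum_sq_eq (d : ℕ) (m : ℤ) : Finite {k : Fin d → ℤ // ∑ i, k i ^ 2 = m} := by
  have hsub : {k : Fin d → ℤ | ∑ i, k i ^ 2 = m} ⊆ Set.univ.pi fun _ => Set.Icc (-m) m := by
    intro k hk i _
    have hi : k i ^ 2 ≤ m :=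
      hk ▸ single_le_sum (fun j _ => sq_nonneg (k j)) (mem_univ i)
    constructor <;> nlinarith [Int.le_self_sq (k i), Int.le_self_sq (-k i)]
  exact ((Set.Finite.pi fun _ => Set.finite_Icc _ _).subset hsub).to_subtype

lemma exists_sq_add_mem_Ioc {N s : ℕ} (hs : s ≤ N ^ 2) :
    ∃ a : ℕ, a ^ 2 + s ∈ Set.Ioc (N ^ 2) ((N + 1) ^ 2) := by
  refine ⟨Nat.sqrt (N ^ 2 - s) + 1, ?_, ?_⟩
  · have h := Nat.lt_succ_sqrt (N ^ 2 - s)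
    nlinarith [Nat.sub_add_cancel hs]
  · have h := Nat.sqrt_le' (N ^ 2 - s)
    have hN : Nat.sqrt (N ^ 2 - s) ≤ N := by nlinarith [Nat.sub_le (N ^ 2) s]
    nlinarith [Nat.sub_add_cancel hs]

lemma card_le_natCard_sum_sq_eq {n : ℕ} {m : ℤ} (F : Finset (Fin n → ℕ))
    (a : (Fin n → ℕ) → ℕ) (ha : ∀ u ∈ F, (a u : ℤ) ^ 2 + ∑ i, (u i : ℤ) ^ 2 = m) :
    #F ≤ Nat.card {k : Fin (n + 1) → ℤ // ∑ i, k i ^ 2 = m} := by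
  have := finite_sum_sq_eq (n + 1) m
  rw [← Nat.card_eq_finsetCard]
  refine Nat.card_le_card_of_injective
    (fun u => ⟨Fin.cons (a u : ℤ) fun i => (u.1 i : ℤ), by simp [Fin.sum_univ_succ, ha u u.2]⟩) ?_
  intro u w huw
  ext i : 2
  simpa using congrFun (congrArg Subtype.val huw) i.succ

lemma mul_div_sq_le (n N : ℕ) : n * (N / n) ^ 2 ≤ N ^ 2 :=
  calc n * (N / n) ^ 2 = N / n * n * (N / n) := by ring
    _ ≤ N * N := Nat.mul_le_mul (Nat.div_mul_le_self N n) (Nat.div_le_self N n)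
    _ = N ^ 2 := (sq N).symm

lemma exists_mem_Ioc_sq_le_natCard_sum_sq_eq {n N M : ℕ} (hM : n * M ^ 2 ≤ N ^ 2) :
    ∃ m : ℕ, m ∈ Set.Ioc (N ^ 2) ((N + 1) ^ 2) ∧
      ((M : ℝ) + 1) ^ n / (2 * N + 1) ≤
        Nat.card {k : Fin (n + 1) → ℤ // ∑ i, k i ^ 2 = (m : ℤ)} := by
  set box := Fintype.piFinset fun _ : Fin n => range (M + 1)
  have hs : ∀ u ∈ box, ∑ i, u i ^ 2 ≤ N ^ 2 := fun u hu =>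
    calc ∑ i, u i ^ 2 ≤ ∑ _i : Fin n, M ^ 2 :=
          sum_le_sum fun i _ => Nat.pow_le_pow_left
            (Nat.lt_succ_iff.mp (mem_range.mp (Fintype.mem_piFinset.mp hu i))) 2
      _ = n * M ^ 2 := by simp
      _ ≤ N ^ 2 := hM
  choose! a ha using fun u hu => exists_sq_add_mem_Ioc (hs u hu)
  have hshell : #(Icc (N ^ 2 + 1) ((N + 1) ^ 2)) = 2 * N + 1 := by
    rw [Nat.card_Icc]; ring_nf; omega
  obtain ⟨m, hm, hfiber⟩ := exists_le_card_fiber_of_nsmul_le_card_of_maps_to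
    (s := box) (t := Icc (N ^ 2 + 1) ((N + 1) ^ 2)) (f := fun u => a u ^ 2 + ∑ i, u i ^ 2)
    (b := ((M : ℝ) + 1) ^ n / (2 * N + 1))
    (fun u hu => mem_Icc.mpr ⟨(ha u hu).1, (ha u hu).2⟩)
    ⟨(N + 1) ^ 2, mem_Icc.mpr ⟨by nlinarith, le_rfl⟩⟩
    (by rw [hshell, Fintype.card_piFinset, nsmul_eq_mul]; push_cast
        rw [mul_div_cancel₀ _ (by positivity)]; simp)
  refine ⟨m, mem_Icc.mp hm, hfiber.trans ?_⟩
  exact_mod_cast card_le_natCard_sum_sq_eq _ a fun u hu => by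
    simpa using congrArg (Nat.cast : ℕ → ℤ) (mem_filter.mp hu).2

lemma inv_mul_pow_le_pow_succ_div {e N M : ℕ} {l : ℝ} (hl₀ : 0 ≤ l) (hl : l ≤ N + 1)
    (hNM : N + 1 ≤ (e + 1) * (M + 1)) :
    (2 * ((e : ℝ) + 1) ^ (e + 1))⁻¹ * l ^ e ≤ ((M : ℝ) + 1) ^ (e + 1) / (2 * N + 1) := by
  have hNM' : ((N : ℝ) + 1) / (e + 1) ≤ M + 1 := by
    rw [div_le_iff₀ (by positivity)]; exact_mod_cast (by linarith : N + 1 ≤ (M + 1) * (e + 1))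
  calc (2 * ((e : ℝ) + 1) ^ (e + 1))⁻¹ * l ^ e
      ≤ (2 * ((e : ℝ) + 1) ^ (e + 1))⁻¹ * ((N : ℝ) + 1) ^ e := by gcongr
    _ = (((N : ℝ) + 1) / (e + 1)) ^ (e + 1) / (2 * (N + 1)) := by
      rw [div_pow]; field_simp; ring
    _ ≤ ((M : ℝ) + 1) ^ (e + 1) / (2 * N + 1) := by gcongr; linarith

lemma sqrt_mem_Ioc_of_mem_Ioc_sq {N m : ℕ} (hm : m ∈ Set.Ioc (N ^ 2) ((N + 1) ^ 2)) :
    √(m : ℝ) ∈ Set.Ioc (N : ℝ) (N + 1) :=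
  ⟨(Real.lt_sqrt N.cast_nonneg).mpr (by exact_mod_cast hm.1),
    Real.sqrt_le_iff.mpr ⟨by positivity, by exact_mod_cast hm.2⟩⟩

/-- For every `R > 0` and dimension `d ≥ 2`, there exists `λ ∈ [R-1, R+1]` with `λ² ∈ ℕ`
such that the number of lattice points on the sphere of radius `λ` in `ℤ^d` is
at least `c_d · λ^{d-2}` for a constant `c_d > 0` depending only on `d`. -/
theorem stmt_0 (d : ℕ) (hd : 2 ≤ d) :
    ∃ c : ℝ, 0 < c ∧ ∀ R : ℝ, 0 < R →
      ∃ lam : ℝ, lam ∈ Set.Icc (R - 1) (R + 1) ∧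
        ∃ m : ℕ, lam ^ 2 = (m : ℝ) ∧
          c * lam ^ (d - 2) ≤
            (Nat.card {k : Fin d → ℤ // ∑ i, (k i) ^ 2 = (m : ℤ)} : ℝ) := by
  obtain ⟨e, rfl⟩ : ∃ e, d = e + 2 := ⟨d - 2, by omega⟩
  refine ⟨(2 * ((e : ℝ) + 1) ^ (e + 1))⁻¹, by positivity, fun R hR => ?_⟩
  set N := ⌊R⌋₊
  obtain ⟨m, hm, hcard⟩ := exists_mem_Ioc_sq_le_natCard_sum_sq_eq (mul_div_sq_le (e + 1) N)
  obtain ⟨hlo, hhi⟩ := sqrt_mem_Ioc_of_mem_Ioc_sq hm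
  refine ⟨√(m : ℝ), ⟨by linarith [Nat.sub_one_lt_floor R], by linarith [Nat.floor_le hR.le]⟩,
    m, Real.sq_sqrt m.cast_nonneg, ?_⟩
  rw [Nat.add_sub_cancel]
  exact (inv_mul_pow_le_pow_succ_div (Real.sqrt_nonneg _) hhi
    (Nat.lt_mul_div_succ N e.succ_pos)).trans hcard
end

section
/- Let d ≥ 3 and let S = {x ∈ 𝕋^d : x₁ = x₂ = 0}. Then the trace inequality fails for every probability measure μ with supp μ ⊆ S: there is no constant C such that ∫|u|² dμ ≤ C ∫|u|² dx for all Laplace eigenfunctions u on 𝕋^d. -/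
open MeasureTheory Complex

/-- The character `x ↦ e^{2πi k·x}` on the torus `𝕋^d = (ℝ/ℤ)^d`. -/
noncomputable def torusChar {d : ℕ} (k : Fin d → ℤ) (x : Fin d → AddCircle (1:ℝ)) : ℂ :=
  ∏ i, fourier (k i) (x i)

/-- The set of lattice points `k ∈ ℤ^d` with `|k|² = n`. -/
noncomputable def sphereFinset (d n : ℕ) : Finset (Fin d → ℤ) :=
  Finset.filter (fun k => ∑ i, (k i)^2 = (n : ℤ))
    (Finset.Icc (fun _ => -(n : ℤ)) (fun _ => (n : ℤ)))

/-- A Laplace eigenfunction on `𝕋^d` with eigenvalue `-4π²n`: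
a trigonometric polynomial with frequencies on the sphere `|k|² = n`. -/
noncomputable def eigenfun {d : ℕ} (n : ℕ) (c : (Fin d → ℤ) → ℂ)
    (x : Fin d → AddCircle (1:ℝ)) : ℂ :=
  ∑ k ∈ sphereFinset d n, c k * torusChar k x

/-- The Fourier coefficient `μ̂(k) = ∫ e^{-2πi k·x} dμ(x)` of a measure on the torus. -/
noncomputable def fourierCoeff' {d : ℕ} (μ : Measure (Fin d → AddCircle (1:ℝ)))
    (k : Fin d → ℤ) : ℂ :=
  ∫ x, (starRingEnd ℂ) (torusChar k x) ∂μ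

/-!
Test the inequality on `u = ∑_{k ∈ T} e_k`, where `T` is a set of `m + 1` frequencies on a sphere
`|k|² = 5ᵐ` lying in the `(k₁, k₂)`-plane; they come from the distinct Gaussian integers
`(2 + i)ʲ (2 - i)ᵐ⁻ʲ` of norm `5ᵐ`, distinct because `2 + i` divides `(2 + i)ᵗ` but not `(2 - i)ᵗ`.
Every such character equals `1` on `S`, so `∫ |u|² dμ = (m + 1)²`, while `∫ |u|² dx = m + 1` by
Parseval. Hence `C ≥ m + 1` for every `m`.
-/

open scoped Finset ComplexConjugate

namespace GaussianInt

/-- Reduction modulo the prime `2 + i`, whose residue field is `ZMod 5` with `i ↦ -2`. -/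
def toZModFive : GaussianInt →+* ZMod 5 := Zsqrtd.lift ⟨-2, by decide⟩

theorem pow_two_add_I_ne_pow_two_sub_I {t : ℕ} (ht : t ≠ 0) :
    (⟨2, 1⟩ : GaussianInt) ^ t ≠ ⟨2, -1⟩ ^ t := by
  intro h
  have hmod := congrArg toZModFive h
  rw [map_pow, map_pow, show toZModFive ⟨2, 1⟩ = 0 by decide,
    show toZModFive ⟨2, -1⟩ = 4 by decide, zero_pow ht] at hmod
  have hunit : (4 : ZMod 5) ^ t * 4 ^ t = 1 := by
    rw [← mul_pow, show (4 : ZMod 5) * 4 = 1 by decide, one_pow]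
  rw [← hmod, zero_mul] at hunit
  exact absurd hunit (by decide)

theorem injOn_pow_two_add_I_mul_pow_two_sub_I (m : ℕ) :
    Set.InjOn (fun j => (⟨2, 1⟩ : GaussianInt) ^ j * ⟨2, -1⟩ ^ (m - j)) (Set.Iic m) := by
  intro j hj j' hj' h
  by_contra hne
  wlog hlt : j < j' generalizing j j'
  · exact this hj' hj h.symm (Ne.symm hne) (by omega)
  obtain ⟨t, ht, rfl⟩ : ∃ t, t ≠ 0 ∧ j' = j + t := ⟨j' - j, by omega, by omega⟩
  have hm : m - j = m - (j + t) + t := by simp only [Set.mem_Iic] at hj'; omega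
  have hcommon : (⟨2, 1⟩ : GaussianInt) ^ j * ⟨2, -1⟩ ^ (m - (j + t)) ≠ 0 :=
    mul_ne_zero (pow_ne_zero _ (by decide)) (pow_ne_zero _ (by decide))
  refine pow_two_add_I_ne_pow_two_sub_I ht (mul_left_cancel₀ hcommon ?_).symm
  simp only [hm, pow_add] at h
  linear_combination h

theorem norm_pow_two_add_I_mul_pow_two_sub_I {m j : ℕ} (hj : j ≤ m) :
    ((⟨2, 1⟩ : GaussianInt) ^ j * ⟨2, -1⟩ ^ (m - j)).norm = 5 ^ m := by
  have norm_pow (z : GaussianInt) (k : ℕ) : (z ^ k).norm = z.norm ^ k :=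
    map_pow Zsqrtd.normMonoidHom z k
  rw [Zsqrtd.norm_mul, norm_pow, norm_pow, show Zsqrtd.norm ⟨2, 1⟩ = 5 by decide,
    show Zsqrtd.norm ⟨2, -1⟩ = 5 by decide, ← pow_add, Nat.add_sub_cancel' hj]

theorem exists_card_eq_forall_norm_eq (m : ℕ) :
    ∃ S : Finset GaussianInt, #S = m + 1 ∧ ∀ z ∈ S, z.norm = 5 ^ m := by
  refine ⟨(Finset.range (m + 1)).image fun j => ⟨2, 1⟩ ^ j * ⟨2, -1⟩ ^ (m - j), ?_, ?_⟩
  · rw [Finset.card_image_of_injOn, Finset.card_range]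
    exact (injOn_pow_two_add_I_mul_pow_two_sub_I m).mono fun j hj => by
      simpa [Nat.lt_succ_iff] using hj
  · simp only [Finset.mem_image, Finset.mem_range, forall_exists_index, and_imp]
    rintro _ j hj rfl
    exact norm_pow_two_add_I_mul_pow_two_sub_I (Nat.lt_succ_iff.mp hj)

end GaussianInt

theorem integral_fourier_unitAddCircle (n : ℤ) :
    ∫ x : AddCircle (1 : ℝ), fourier n x = if n = 0 then 1 else 0 := by
  split_ifs with hn
  · simp [hn, Measure.real, AddCircle.measure_univ]
  · exact integral_eq_zero_of_add_right_eq_neg (fourier_add_half_inv_index hn one_pos)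

section torusChar

variable {d : ℕ}

theorem continuous_torusChar (k : Fin d → ℤ) : Continuous (torusChar k) := by
  unfold torusChar
  fun_prop

theorem torusChar_mul_conj (k l : Fin d → ℤ) (x : Fin d → AddCircle (1 : ℝ)) :
    torusChar k x * conj (torusChar l x) = torusChar (k - l) x := by
  simp only [torusChar, map_prod, ← Finset.prod_mul_distrib, ← fourier_neg, ← fourier_add,
    Pi.sub_apply, sub_eq_add_neg]

theorem torusChar_eq_one {k : Fin d → ℤ} {x : Fin d → AddCircle (1 : ℝ)}
    (h : ∀ i, k i = 0 ∨ x i = 0) : torusChar k x = 1 :=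
  Finset.prod_eq_one fun i _ => (h i).elim (fun hk => by rw [hk, fourier_zero])
    (fun hx => by rw [hx, fourier_eval_zero])

theorem integral_torusChar (k : Fin d → ℤ) :
    ∫ x, torusChar k x = if k = 0 then 1 else 0 := by
  simp only [torusChar, integral_fintype_prod_volume_eq_prod, integral_fourier_unitAddCircle]
  split_ifs with hk
  · simp [hk]
  · obtain ⟨i, hi⟩ := Function.ne_iff.mp hk
    exact Finset.prod_eq_zero (Finset.mem_univ i) (if_neg hi)

theorem integral_norm_sq_sum_torusChar (T : Finset (Fin d → ℤ)) (c : (Fin d → ℤ) → ℂ) :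
    ∫ x, ‖∑ k ∈ T, c k * torusChar k x‖ ^ 2 = ∑ k ∈ T, ‖c k‖ ^ 2 := by
  have hexpand (x : Fin d → AddCircle (1 : ℝ)) :
      ((‖∑ k ∈ T, c k * torusChar k x‖ ^ 2 : ℝ) : ℂ) =
        ∑ k ∈ T, ∑ l ∈ T, c k * conj (c l) * torusChar (k - l) x := by
    rw [ofReal_pow, ← mul_conj', map_sum, Finset.sum_mul_sum]
    refine Finset.sum_congr rfl fun k _ => Finset.sum_congr rfl fun l _ => ?_
    rw [map_mul, ← torusChar_mul_conj]
    ring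
  have hint (k l : Fin d → ℤ) :
      Integrable (fun x => c k * conj (c l) * torusChar (k - l) x) :=
    ((continuous_torusChar _).const_mul _).integrable_of_hasCompactSupport
      (HasCompactSupport.of_compactSpace _)
  apply ofReal_injective
  rw [← integral_complex_ofReal]
  simp_rw [hexpand]
  rw [integral_finsetSum _ fun k _ => integrable_finsetSum _ fun l _ => hint k l]
  simp_rw [integral_finsetSum _ fun l _ => hint _ l, integral_const_mul, integral_torusChar,
    sub_eq_zero, mul_ite, mul_one, mul_zero, Finset.sum_ite_eq, mul_conj']
  push_cast
  exact Finset.sum_congr rfl fun k hk => if_pos hk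

theorem integral_norm_sq_sum_torusChar_of_ae_eq_one
    {μ : Measure (Fin d → AddCircle (1 : ℝ))} [IsProbabilityMeasure μ] {T : Finset (Fin d → ℤ)}
    (h : ∀ᵐ x ∂μ, ∀ k ∈ T, torusChar k x = 1) :
    ∫ x, ‖∑ k ∈ T, torusChar k x‖ ^ 2 ∂μ = (#T : ℝ) ^ 2 := by
  have hconst : ∀ᵐ x ∂μ, ‖∑ k ∈ T, torusChar k x‖ ^ 2 = (#T : ℝ) ^ 2 := by
    filter_upwards [h] with x hx
    rw [Finset.sum_congr rfl hx]
    simp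
  rw [integral_congr_ae hconst]
  simp

end torusChar

theorem mem_sphereFinset {d n : ℕ} {k : Fin d → ℤ} :
    k ∈ sphereFinset d n ↔ ∑ i, k i ^ 2 = n := by
  refine ⟨fun hk => (Finset.mem_filter.mp hk).2, fun hk => Finset.mem_filter.mpr ⟨?_, hk⟩⟩
  have hle (i : Fin d) : k i ^ 2 ≤ n :=
    hk ▸ Finset.single_le_sum (fun j _ => sq_nonneg (k j)) (Finset.mem_univ i)
  refine Finset.mem_Icc.mpr ⟨fun i => ?_, fun i => ?_⟩
  · linarith [neg_sq (k i) ▸ Int.le_self_sq (-k i), hle i]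
  · linarith [Int.le_self_sq (k i), hle i]

theorem eigenfun_indicator {d n : ℕ} {T : Finset (Fin d → ℤ)} (hT : T ⊆ sphereFinset d n)
    (x : Fin d → AddCircle (1 : ℝ)) :
    eigenfun n (fun k => if k ∈ T then 1 else 0) x = ∑ k ∈ T, torusChar k x := by
  simp only [eigenfun, ite_mul, one_mul, zero_mul, Finset.sum_ite_mem,
    Finset.inter_eq_right.mpr hT]

theorem exists_subset_sphereFinset_card_eq {d : ℕ} {i j : Fin d} (hij : i ≠ j) (m : ℕ) :
    ∃ n, ∃ T ⊆ sphereFinset d n, #T = m + 1 ∧ ∀ k ∈ T, ∀ l, k l = 0 ∨ l = i ∨ l = j := by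
  obtain ⟨S, hcard, hnorm⟩ := GaussianInt.exists_card_eq_forall_norm_eq m
  let emb (z : GaussianInt) : Fin d → ℤ := Pi.single i z.re + Pi.single j z.im
  have emb_i (z : GaussianInt) : emb z i = z.re := by simp [emb, hij]
  have emb_j (z : GaussianInt) : emb z j = z.im := by simp [emb, hij.symm]
  have emb_other (z : GaussianInt) (l : Fin d) (hi : l ≠ i) (hj : l ≠ j) : emb z l = 0 := by
    simp [emb, hi, hj]
  refine ⟨5 ^ m, S.image emb, fun k hk => ?_, ?_, ?_⟩
  · obtain ⟨z, hz, rfl⟩ := Finset.mem_image.mp hk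
    have hsq := hnorm z hz
    rw [Zsqrtd.norm_def] at hsq
    rw [mem_sphereFinset, Fintype.sum_eq_add i j hij fun l hl => by
      rw [emb_other z l hl.1 hl.2, sq, mul_zero], emb_i, emb_j]
    push_cast
    linarith
  · rw [Finset.card_image_of_injective _ fun z w h => Zsqrtd.ext_iff.mpr
      ⟨by simpa [emb_i] using congrFun h i, by simpa [emb_j] using congrFun h j⟩, hcard]
  · simp only [Finset.mem_image]
    rintro _ ⟨z, -, rfl⟩ l
    by_contra! h
    exact h.1 (emb_other z l h.2.1 h.2.2)

/-- For `d ≥ 3`, the trace inequality fails for every probability measure supported in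
the codimension-two subspace `S = {x ∈ 𝕋^d : x₁ = x₂ = 0}`. -/
theorem stmt_9 {d : ℕ} (hd : 3 ≤ d) (μ : Measure (Fin d → AddCircle (1:ℝ)))
    [IsProbabilityMeasure μ]
    (hsupp : μ {x | ¬ (x ⟨0, by omega⟩ = 0 ∧ x ⟨1, by omega⟩ = 0)} = 0) :
    ¬ ∃ C : ℝ, ∀ (n : ℕ) (c : (Fin d → ℤ) → ℂ),
        ∫ x, ‖eigenfun n c x‖ ^ 2 ∂μ ≤ C * ∫ x, ‖eigenfun n c x‖ ^ 2 := by
  rintro ⟨C, hC⟩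
  obtain ⟨n, T, hT, hcard, hplane⟩ := exists_subset_sphereFinset_card_eq
    (i := (⟨0, by omega⟩ : Fin d)) (j := (⟨1, by omega⟩ : Fin d)) (by simp) ⌈C⌉₊
  have hvol : ∫ x, ‖eigenfun n (fun k => if k ∈ T then 1 else 0) x‖ ^ 2 = #T := by
    simpa [eigenfun_indicator hT] using integral_norm_sq_sum_torusChar T 1
  have hμ : ∫ x, ‖eigenfun n (fun k => if k ∈ T then 1 else 0) x‖ ^ 2 ∂μ = (#T : ℝ) ^ 2 := by
    simp only [eigenfun_indicator hT]
    refine integral_norm_sq_sum_torusChar_of_ae_eq_one ?_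
    filter_upwards [ae_iff.mpr hsupp] with x hx k hk
    exact torusChar_eq_one fun l => (hplane k hk l).imp_right (by rintro (rfl | rfl) <;> simp [hx])
  have hineq := hC n fun k => if k ∈ T then 1 else 0
  rw [hvol, hμ, hcard] at hineq
  push_cast at hineq
  nlinarith [Nat.le_ceil C]
end

section
/- Let μ be a Borel probability measure on 𝕋^d whose support is not contained in the zero set of any nonzero trigonometric polynomial, and let r > 0. Then there exist constants 0 < c ≤ C < ∞ (depending on d, μ, r) such that c ‖u‖²_{L²(dx)} ≤ ∫|u|² dμ ≤ C ‖u‖²_{L²(dx)} for all trigonometric polynomials u on 𝕋^d whose Fourier support has diameter at most r. -/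
/-!
Multiplying a trigonometric polynomial by a character does not change its modulus, so after
translating one of its frequencies to the origin, a polynomial whose Fourier support has diameter
at most `r` has its support in the fixed finite set `S = {k : ‖k‖ ≤ r}`. On the
finite-dimensional coefficient space `S → ℂ`, the maps to `L²(dx)` and to `L²(μ)` are both
injective: the first by orthonormality of the characters, the second because `μ` does not live on
the zero set of a nonzero trigonometric polynomial. Any two injective linear maps out of a
finite-dimensional space have comparable norms.
-/

open MeasureTheory Complex

namespace LinearMap

variable {𝕜 E F G : Type*} [NontriviallyNormedField 𝕜] [CompleteSpace 𝕜]
  [AddCommGroup E] [Module 𝕜 E] [FiniteDimensional 𝕜 E]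
  [NormedAddCommGroup F] [NormedSpace 𝕜 F] [NormedAddCommGroup G] [NormedSpace 𝕜 G]

theorem exists_norm_le_mul_norm_of_injective (f : E →ₗ[𝕜] F) (g : E →ₗ[𝕜] G)
    (hf : Function.Injective f) : ∃ C, ∀ x, ‖g x‖ ≤ C * ‖f x‖ := by
  let e := LinearEquiv.ofInjective f hf
  let h := (g ∘ₗ e.symm.toLinearMap).toContinuousLinearMap
  refine ⟨‖h‖, fun x => ?_⟩
  calc ‖g x‖ = ‖h (e x)‖ := by simp [h]
    _ ≤ ‖h‖ * ‖f x‖ := h.le_opNorm (e x)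

theorem exists_sq_norm_comparable_of_injective (f : E →ₗ[𝕜] F) (g : E →ₗ[𝕜] G)
    (hf : Function.Injective f) (hg : Function.Injective g) :
    ∃ c C : ℝ, 0 < c ∧ c ≤ C ∧ ∀ x, c * ‖f x‖ ^ 2 ≤ ‖g x‖ ^ 2 ∧ ‖g x‖ ^ 2 ≤ C * ‖f x‖ ^ 2 := by
  obtain ⟨C₁, hC₁⟩ := exists_norm_le_mul_norm_of_injective f g hf
  obtain ⟨C₂, hC₂⟩ := exists_norm_le_mul_norm_of_injective g f hg
  have hM₁ : 1 ≤ max C₁ 1 := le_max_right _ _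
  have hM₂ : 1 ≤ max C₂ 1 := le_max_right _ _
  refine ⟨(max C₂ 1 ^ 2)⁻¹, max C₁ 1 ^ 2, by positivity,
    (inv_le_one_of_one_le₀ (one_le_pow₀ hM₂)).trans (one_le_pow₀ hM₁), fun x => ⟨?_, ?_⟩⟩
  · rw [inv_mul_le_iff₀ (by positivity), ← mul_pow]
    gcongr
    exact (hC₂ x).trans (by gcongr; exact le_max_left _ _)
  · rw [← mul_pow]
    gcongr
    exact (hC₁ x).trans (by gcongr; exact le_max_left _ _)

end LinearMap

theorem ContinuousMap.norm_toLp_two_sq {X 𝕜 : Type*} [TopologicalSpace X] [CompactSpace X]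
    [MeasurableSpace X] [BorelSpace X] [RCLike 𝕜] (ν : Measure X) [IsFiniteMeasure ν]
    (f : C(X, 𝕜)) : ‖ContinuousMap.toLp 2 ν 𝕜 f‖ ^ 2 = ∫ x, ‖f x‖ ^ 2 ∂ν := by
  rw [@norm_sq_eq_re_inner 𝕜, ContinuousMap.inner_toLp]
  simp_rw [RCLike.mul_conj, ← RCLike.ofReal_pow]
  rw [integral_ofReal, RCLike.ofReal_re]

open UnitAddTorus

section Torus

variable {d : ℕ}

theorem coe_mFourier_eq_torusChar (k : Fin d → ℤ) : ⇑(mFourier k) = torusChar k := rfl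

theorem torusChar_add (k l : Fin d → ℤ) (x : Fin d → AddCircle (1:ℝ)) :
    torusChar (k + l) x = torusChar k x * torusChar l x :=
  mFourier_add (d := Fin d)

theorem norm_torusChar (k : Fin d → ℤ) (x : Fin d → AddCircle (1:ℝ)) : ‖torusChar k x‖ = 1 := by
  simp only [torusChar, norm_prod, fourier_apply, Circle.norm_coe, Finset.prod_const_one]

theorem norm_sum_torusChar_shift (F : Finset (Fin d → ℤ)) (a : (Fin d → ℤ) → ℂ)
    (k₀ : Fin d → ℤ) (x : Fin d → AddCircle (1:ℝ)) :
    ‖∑ k ∈ F, a k * torusChar k x‖ =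
      ‖∑ k ∈ F.map (Equiv.subRight k₀).toEmbedding, a (k + k₀) * torusChar k x‖ := by
  have hsum : ∑ k ∈ F, a k * torusChar k x =
      torusChar k₀ x * ∑ k ∈ F.map (Equiv.subRight k₀).toEmbedding, a (k + k₀) * torusChar k x := by
    rw [Finset.sum_map, Finset.mul_sum]
    refine Finset.sum_congr rfl fun k _ => ?_
    simp only [Equiv.coe_toEmbedding, Equiv.subRight_apply, sub_add_cancel]
    rw [mul_left_comm, ← torusChar_add, add_sub_cancel]
  rw [hsum, norm_mul, norm_torusChar, one_mul]

-- `orthonormal_mFourier` is stated for this measure (a local instance there), not for `volume`.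
theorem volume_torus_eq_pi_haarAddCircle :
    (volume : Measure (Fin d → AddCircle (1:ℝ))) = Measure.pi fun _ => AddCircle.haarAddCircle := by
  rw [volume_pi, AddCircle.volume_eq_smul_haarAddCircle, ENNReal.ofReal_one, one_smul]

noncomputable def trigPoly (S : Finset (Fin d → ℤ)) : (S → ℂ) →ₗ[ℂ] C(UnitAddTorus (Fin d), ℂ) :=
  Fintype.linearCombination ℂ fun k : S => mFourier (k : Fin d → ℤ)

noncomputable def trigPolyLp (ν : Measure (Fin d → AddCircle (1:ℝ))) [IsFiniteMeasure ν]
    (S : Finset (Fin d → ℤ)) : (S → ℂ) →ₗ[ℂ] Lp ℂ 2 ν :=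
  (ContinuousMap.toLp (E := ℂ) 2 ν ℂ).toLinearMap ∘ₗ trigPoly S

theorem trigPoly_apply (S : Finset (Fin d → ℤ)) (b : S → ℂ) (x : Fin d → AddCircle (1:ℝ)) :
    trigPoly S b x = ∑ k : S, b k * torusChar k x := by
  simp [trigPoly, Fintype.linearCombination_apply, coe_mFourier_eq_torusChar]

theorem trigPoly_restrict {S F : Finset (Fin d → ℤ)} {a : (Fin d → ℤ) → ℂ}
    (hFS : ∀ k ∈ F, a k ≠ 0 → k ∈ S) (x : Fin d → AddCircle (1:ℝ)) :
    trigPoly S (fun k => if ↑k ∈ F then a k else 0) x = ∑ k ∈ F, a k * torusChar k x := by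
  rw [trigPoly_apply, Finset.sum_coe_sort S fun k => (if k ∈ F then a k else 0) * torusChar k x]
  simp_rw [ite_mul, zero_mul]
  rw [Finset.sum_ite_mem]
  refine Finset.sum_subset Finset.inter_subset_right fun k hkF hkS => ?_
  have hak : a k = 0 := by
    by_contra h
    exact hkS (Finset.mem_inter.mpr ⟨hFS k hkF h, hkF⟩)
  simp [hak]

theorem trigPolyLp_haar_injective (S : Finset (Fin d → ℤ)) :
    Function.Injective (trigPolyLp (Measure.pi fun _ => AddCircle.haarAddCircle) S) := by
  have hlc : trigPolyLp (Measure.pi fun _ => AddCircle.haarAddCircle) S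
      = Fintype.linearCombination ℂ fun k : S => mFourierLp 2 (k : Fin d → ℤ) := by
    refine LinearMap.ext fun b => ?_
    simp only [trigPolyLp, trigPoly, LinearMap.coe_comp, ContinuousLinearMap.coe_coe,
      Function.comp_apply, Fintype.linearCombination_apply, map_sum, map_smul]
    rfl
  rw [hlc]
  exact (orthonormal_mFourier.linearIndependent.comp _
    Subtype.val_injective).fintypeLinearCombination_injective

theorem trigPolyLp_injective (μ : Measure (Fin d → AddCircle (1:ℝ))) [IsFiniteMeasure μ]
    (S : Finset (Fin d → ℤ))
    (hμ : ∀ c : (Fin d → ℤ) → ℂ, (∃ k ∈ S, c k ≠ 0) →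
      0 < μ {x | (∑ k ∈ S, c k * torusChar k x) ≠ 0}) :
    Function.Injective (trigPolyLp μ S) := by
  rw [← LinearMap.ker_eq_bot, LinearMap.ker_eq_bot']
  intro b hb
  by_contra hne
  obtain ⟨i, hi⟩ := Function.ne_iff.mp hne
  have hzero : trigPoly S b =ᵐ[μ] 0 :=
    (ContinuousMap.coeFn_toLp μ _).symm.trans (hb ▸ Lp.coeFn_zero _ _ _)
  have hpos := hμ (Function.extend Subtype.val b 0) ⟨i, i.2, by
    simpa [Subtype.val_injective.extend_apply] using hi⟩
  have hset : {x | (∑ k ∈ S, Function.extend Subtype.val b 0 k * torusChar k x) ≠ 0}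
      = {x | trigPoly S b x ≠ 0} := by
    ext x
    simp [trigPoly_apply, ← Finset.sum_coe_sort S]
  rw [hset] at hpos
  exact hpos.ne' (ae_iff.mp hzero)

theorem exists_integral_comparable_of_support_subset (μ : Measure (Fin d → AddCircle (1:ℝ)))
    [IsFiniteMeasure μ] (S : Finset (Fin d → ℤ))
    (hμ : ∀ c : (Fin d → ℤ) → ℂ, (∃ k ∈ S, c k ≠ 0) →
      0 < μ {x | (∑ k ∈ S, c k * torusChar k x) ≠ 0}) :
    ∃ c C : ℝ, 0 < c ∧ c ≤ C ∧
      ∀ (F : Finset (Fin d → ℤ)) (a : (Fin d → ℤ) → ℂ), (∀ k ∈ F, a k ≠ 0 → k ∈ S) →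
        c * ∫ x, ‖∑ k ∈ F, a k * torusChar k x‖ ^ 2 ≤
            (∫ x, ‖∑ k ∈ F, a k * torusChar k x‖ ^ 2 ∂μ) ∧
          (∫ x, ‖∑ k ∈ F, a k * torusChar k x‖ ^ 2 ∂μ) ≤
            C * ∫ x, ‖∑ k ∈ F, a k * torusChar k x‖ ^ 2 := by
  obtain ⟨c, C, hc, hcC, hcomp⟩ := LinearMap.exists_sq_norm_comparable_of_injective _ _
    (trigPolyLp_haar_injective S) (trigPolyLp_injective μ S hμ)
  refine ⟨c, C, hc, hcC, fun F a hFS => ?_⟩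
  have hnorm (ν : Measure (Fin d → AddCircle (1:ℝ))) [IsFiniteMeasure ν] :
      ‖trigPolyLp ν S fun k => if ↑k ∈ F then a k else 0‖ ^ 2
        = ∫ x, ‖∑ k ∈ F, a k * torusChar k x‖ ^ 2 ∂ν := by
    simp only [trigPolyLp, LinearMap.comp_apply, ContinuousLinearMap.coe_coe,
      ContinuousMap.norm_toLp_two_sq, trigPoly_restrict hFS]
  rw [volume_torus_eq_pi_haarAddCircle, ← hnorm, ← hnorm]
  exact hcomp _

end Torus

theorem stmt_11_general {d : ℕ} (μ : Measure (Fin d → AddCircle (1:ℝ))) [IsProbabilityMeasure μ]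
    (hsupp : ∀ (F : Finset (Fin d → ℤ)) (c : (Fin d → ℤ) → ℂ),
      (∃ k ∈ F, c k ≠ 0) → 0 < μ {x | (∑ k ∈ F, c k * torusChar k x) ≠ 0})
    (r : ℝ) :
    ∃ c C : ℝ, 0 < c ∧ c ≤ C ∧
      ∀ (F : Finset (Fin d → ℤ)) (a : (Fin d → ℤ) → ℂ),
        (∀ k ∈ F, ∀ l ∈ F, a k ≠ 0 → a l ≠ 0 → ‖(k - l : Fin d → ℤ)‖ ≤ r) →
        c * ∫ x, ‖∑ k ∈ F, a k * torusChar k x‖ ^ 2 ≤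
            (∫ x, ‖∑ k ∈ F, a k * torusChar k x‖ ^ 2 ∂μ) ∧
          (∫ x, ‖∑ k ∈ F, a k * torusChar k x‖ ^ 2 ∂μ) ≤
            C * ∫ x, ‖∑ k ∈ F, a k * torusChar k x‖ ^ 2 := by
  have hball := (isCompact_closedBall (0 : Fin d → ℤ) r).finite_of_discrete
  obtain ⟨c, C, hc, hcC, hcomp⟩ :=
    exists_integral_comparable_of_support_subset μ hball.toFinset (hsupp _)
  refine ⟨c, C, hc, hcC, fun F a hdiam => ?_⟩
  obtain ⟨k₀, hk₀⟩ : ∃ k₀, ∀ k ∈ F, a k ≠ 0 → ‖k - k₀‖ ≤ r := by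
    by_cases h : ∃ k₀ ∈ F, a k₀ ≠ 0
    · obtain ⟨k₀, hk₀, ha₀⟩ := h
      exact ⟨k₀, fun k hk ha => hdiam k hk k₀ hk₀ ha ha₀⟩
    · push Not at h
      exact ⟨0, fun k hk ha => absurd (h k hk) ha⟩
  simp_rw [norm_sum_torusChar_shift F a k₀]
  refine hcomp _ _ fun k hk ha => ?_
  obtain ⟨l, hl, rfl⟩ := Finset.mem_map.mp hk
  simpa using hk₀ l hl (by simpa using ha)

/-- If the support of `μ` is not contained in the zero set of any nonzero trigonometric
polynomial, then for every `r > 0` the norms `‖u‖_{L²(dμ)}` and `‖u‖_{L²(dx)}` are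
uniformly comparable over trigonometric polynomials whose Fourier support has diameter
at most `r`. -/
theorem stmt_11 {d : ℕ} (μ : Measure (Fin d → AddCircle (1:ℝ))) [IsProbabilityMeasure μ]
    (hsupp : ∀ (F : Finset (Fin d → ℤ)) (c : (Fin d → ℤ) → ℂ),
      (∃ k ∈ F, c k ≠ 0) → 0 < μ {x | (∑ k ∈ F, c k * torusChar k x) ≠ 0})
    (r : ℝ) (hr : 0 < r) :
    ∃ c C : ℝ, 0 < c ∧ c ≤ C ∧
      ∀ (F : Finset (Fin d → ℤ)) (a : (Fin d → ℤ) → ℂ),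
        (∀ k ∈ F, ∀ l ∈ F, a k ≠ 0 → a l ≠ 0 → ‖(k - l : Fin d → ℤ)‖ ≤ r) →
        c * ∫ x, ‖∑ k ∈ F, a k * torusChar k x‖ ^ 2 ≤
            (∫ x, ‖∑ k ∈ F, a k * torusChar k x‖ ^ 2 ∂μ) ∧
          (∫ x, ‖∑ k ∈ F, a k * torusChar k x‖ ^ 2 ∂μ) ≤
            C * ∫ x, ‖∑ k ∈ F, a k * torusChar k x‖ ^ 2 :=
  stmt_11_general μ hsupp r
end

section
/- For n ≥ 3, let h_n = 1/(n (ln n)²) and define a strictly decreasing sequence (a_n) with a_{n-1} - a_n = 2h_n and a_n → 0, and let A = ∪_{n≥3} (a_n, a_n + h_n) ⊂ (0,3). Then for every ε > 0 the characteristic function 𝟙_A does not belong to W^{ε,1}(0,3): its Gagliardo seminorm ∫₀³∫₀³ |𝟙_A(x) - 𝟙_A(y)|/|x-y|^{1+ε} dx dy is infinite. -/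
/-!
Every interval `(a_n, a_n + h_n)` of `A` is followed by a gap `(a_n + h_n, a_{n-1})` of the same
length `h_n` outside `A`. On the product of the two the Gagliardo integrand is at least
`(2 h_n)^{-(1+ε)}`, so this rectangle contributes at least `2^{-(1+ε)} h_n^{1-ε}`. The rectangles
are disjoint, and `h_n^{1-ε} ≥ 1/n` for large `n` because `(log n)^{2(1-ε)} = o(n^ε)`, so the
seminorm dominates the harmonic series.
-/

open MeasureTheory Real Set Filter Function

lemma tsum_ofReal_eq_top_of_not_summable {ι : Type*} {f : ι → ℝ} (hf : ∀ i, 0 ≤ f i)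
    (hs : ¬ Summable f) : ∑' i, ENNReal.ofReal (f i) = ⊤ := by
  by_contra hne
  exact hs ((ENNReal.summable_toReal hne).congr fun i => ENNReal.toReal_ofReal (hf i))

lemma one_div_le_one_div_mul_log_sq_rpow {x ε : ℝ} (hx : 1 < x)
    (hlog : log x ^ (2 * (1 - ε)) ≤ x ^ ε) : 1 / x ≤ (1 / (x * log x ^ 2)) ^ (1 - ε) := by
  have hL : 0 < log x := log_pos hx
  have hx0 : 0 < x := by linarith
  rw [div_rpow zero_le_one (by positivity), one_rpow, mul_rpow hx0.le (by positivity),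
    ← rpow_natCast, ← rpow_mul hL.le, rpow_sub hx0, rpow_one, Nat.cast_ofNat,
    one_div_le_one_div hx0 (by positivity)]
  calc x / x ^ ε * log x ^ (2 * (1 - ε)) ≤ x / x ^ ε * x ^ ε := by gcongr
    _ = x := div_mul_cancel₀ _ (by positivity)

lemma not_summable_one_div_mul_log_sq_rpow {ε : ℝ} (hε : 0 < ε) :
    ¬ Summable fun n : ℕ => (1 / (n * log n ^ 2)) ^ (1 - ε) := by
  have hlog : ∀ᶠ x : ℝ in atTop, log x ^ (2 * (1 - ε)) ≤ x ^ ε := by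
    filter_upwards [(isLittleO_log_rpow_rpow_atTop (2 * (1 - ε)) hε).bound one_pos,
      eventually_gt_atTop 1] with x hx hx1
    rwa [one_mul, norm_of_nonneg (rpow_nonneg (log_nonneg hx1.le) _),
      norm_of_nonneg (rpow_nonneg (by linarith) _)] at hx
  have hcmp :
      ∀ᶠ n : ℕ in atTop, ‖1 / (n : ℝ)‖ ≤ (1 / (n * log n ^ 2)) ^ (1 - ε) := by
    filter_upwards [tendsto_natCast_atTop_atTop.eventually hlog,
      tendsto_natCast_atTop_atTop.eventually (eventually_gt_atTop (1 : ℝ))] with n hn hn1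
    rw [norm_of_nonneg (by positivity)]
    exact one_div_le_one_div_mul_log_sq_rpow hn1 hn
  exact fun hs => Real.not_summable_one_div_natCast (hs.of_norm_bounded_eventually_nat hcmp)

noncomputable def gagliardoIntegrand (A : Set ℝ) (ε x y : ℝ) : ENNReal :=
  ENNReal.ofReal (|A.indicator (fun _ => (1:ℝ)) x - A.indicator (fun _ => (1:ℝ)) y| /
    |x - y| ^ (1 + ε))

lemma ofReal_inv_rpow_le_gagliardoIntegrand {A : Set ℝ} {ε x y d : ℝ} (hε : -1 ≤ ε)
    (hx : x ∈ A) (hy : y ∉ A) (hxy : x ≠ y) (hd : |x - y| ≤ d) :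
    ENNReal.ofReal ((d ^ (1 + ε))⁻¹) ≤ gagliardoIntegrand A ε x y := by
  have hxy' : 0 < |x - y| := abs_pos.2 (sub_ne_zero.2 hxy)
  rw [gagliardoIntegrand, indicator_of_mem hx, indicator_of_notMem hy, sub_zero, abs_one,
    one_div]
  exact ENNReal.ofReal_le_ofReal
    (inv_anti₀ (rpow_pos_of_pos hxy' _) (rpow_le_rpow hxy'.le hd (by linarith)))

lemma ofReal_rpow_le_lintegral_gagliardoIntegrand {A : Set ℝ} {ε p t : ℝ} (hε : -1 ≤ ε)
    (ht : 0 < t) (hI : Ioo p (p + t) ⊆ A) (hJ : Disjoint (Ioo (p + t) (p + 2 * t)) A) :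
    ENNReal.ofReal (2 ^ (-(1 + ε)) * t ^ (1 - ε)) ≤
      ∫⁻ x in Ioo p (p + t), ∫⁻ y in Ioo (p + t) (p + 2 * t),
        gagliardoIntegrand A ε x y := by
  have hbound : ∀ x ∈ Ioo p (p + t), ∀ y ∈ Ioo (p + t) (p + 2 * t),
      ENNReal.ofReal (((2 * t) ^ (1 + ε))⁻¹) ≤ gagliardoIntegrand A ε x y := by
    intro x hx y hy
    refine ofReal_inv_rpow_le_gagliardoIntegrand hε (hI hx) (hJ.notMem_of_mem_left hy)
      (hx.2.trans hy.1).ne ?_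
    rw [abs_sub_comm, abs_of_pos (by linarith [hx.2, hy.1])]
    linarith [hx.1, hy.2]
  have hcalc : ((2 * t) ^ (1 + ε))⁻¹ * t * t = 2 ^ (-(1 + ε)) * t ^ (1 - ε) := by
    rw [mul_rpow zero_le_two ht.le, mul_inv, ← rpow_neg zero_le_two, ← rpow_neg ht.le,
      show 1 - ε = -(1 + ε) + 1 + 1 by ring, rpow_add_one ht.ne', rpow_add_one ht.ne']
    ring
  calc ENNReal.ofReal (2 ^ (-(1 + ε)) * t ^ (1 - ε))
      = ∫⁻ x in Ioo p (p + t), ∫⁻ y in Ioo (p + t) (p + 2 * t),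
          ENNReal.ofReal (((2 * t) ^ (1 + ε))⁻¹) := by
        rw [← hcalc, ENNReal.ofReal_mul (by positivity), ENNReal.ofReal_mul (by positivity)]
        simp only [setLIntegral_const, Real.volume_Ioo]
        ring_nf
    _ ≤ _ := setLIntegral_mono' measurableSet_Ioo fun x hx =>
        setLIntegral_mono' measurableSet_Ioo (hbound x hx)

section Blocks

variable {a h : ℕ → ℝ}

lemma antitone_of_eq_add_two_mul (hpos : ∀ n, 0 < h n)
    (hstep : ∀ n, a n = a (n + 1) + 2 * h (n + 1)) : Antitone a :=
  antitone_nat_of_succ_le fun n => by linarith [hstep n, hpos (n + 1)]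

lemma antitone_add_of_eq_add_two_mul (hpos : ∀ n, 0 < h n)
    (hstep : ∀ n, a n = a (n + 1) + 2 * h (n + 1)) : Antitone (a + h) :=
  antitone_nat_of_succ_le fun n => by
    simp only [Pi.add_apply]
    linarith [hstep n, hpos n, hpos (n + 1)]

lemma pairwise_disjoint_Ioo_of_eq_add_two_mul (hpos : ∀ n, 0 < h n)
    (hstep : ∀ n, a n = a (n + 1) + 2 * h (n + 1)) :
    Pairwise (Disjoint on fun n => Ioo (a n) (a n + h n)) := by
  refine (pairwise_disjoint_on _).2 fun m n hmn => disjoint_left.2 fun x hxm hxn => ?_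
  have hle := antitone_add_of_eq_add_two_mul hpos hstep (Nat.succ_le_of_lt hmn)
  simp only [Pi.add_apply] at hle
  linarith [hxm.1, hxn.2, hstep m, hpos (m + 1)]

lemma disjoint_Ioo_iUnion_Ioo_of_eq_add_two_mul (hpos : ∀ n, 0 < h n)
    (hstep : ∀ n, a n = a (n + 1) + 2 * h (n + 1)) (n : ℕ) :
    Disjoint (Ioo (a (n + 1) + h (n + 1)) (a (n + 1) + 2 * h (n + 1)))
      (⋃ m, Ioo (a m) (a m + h m)) := by
  refine disjoint_iUnion_right.2 fun m => disjoint_left.2 fun x hxn hxm => ?_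
  rcases le_or_gt m n with hmn | hnm
  · linarith [antitone_of_eq_add_two_mul hpos hstep hmn, hstep n, hxn.2, hxm.1]
  · have hle := antitone_add_of_eq_add_two_mul hpos hstep (Nat.succ_le_of_lt hnm)
    simp only [Pi.add_apply] at hle
    linarith [hxn.1, hxm.2]

end Blocks

theorem lintegral_gagliardoIntegrand_iUnion_Ioo_eq_top {a h : ℕ → ℝ} {l r ε : ℝ}
    (hpos : ∀ n, 0 < h n) (hstep : ∀ n, a n = a (n + 1) + 2 * h (n + 1))
    (hsub : ⋃ n, Ioo (a n) (a n + h n) ⊆ Ioo l r) (hε : -1 ≤ ε)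
    (hdiv : ¬ Summable fun n => h n ^ (1 - ε)) :
    ∫⁻ x in Ioo l r, ∫⁻ y in Ioo l r,
      gagliardoIntegrand (⋃ n, Ioo (a n) (a n + h n)) ε x y = ⊤ := by
  set A := ⋃ n, Ioo (a n) (a n + h n)
  have hIA : ∀ n, Ioo (a n) (a n + h n) ⊆ A := subset_iUnion (fun n => Ioo (a n) (a n + h n))
  have hends : ∀ n, l ≤ a n ∧ a n + h n ≤ r := fun n =>
    (Ioo_subset_Ioo_iff (lt_add_of_pos_right _ (hpos n))).1 ((hIA n).trans hsub)
  have hgap : ∀ n, Ioo (a (n + 1) + h (n + 1)) (a (n + 1) + 2 * h (n + 1)) ⊆ Ioo l r :=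
    fun n => Ioo_subset_Ioo (by linarith [hends (n + 1), hpos (n + 1)])
      (by linarith [hends n, hstep n, hpos n])
  have htop : ∑' n, ENNReal.ofReal (2 ^ (-(1 + ε)) * h (n + 1) ^ (1 - ε)) = ⊤ :=
    tsum_ofReal_eq_top_of_not_summable (fun n => by have := hpos (n + 1); positivity)
      fun hs => hdiv ((summable_nat_add_iff 1).1 ((summable_mul_left_iff (by positivity)).1 hs))
  refine top_le_iff.1 ?_
  calc ⊤ = ∑' n, ENNReal.ofReal (2 ^ (-(1 + ε)) * h (n + 1) ^ (1 - ε)) := htop.symm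
    _ ≤ ∑' n, ∫⁻ x in Ioo (a (n + 1)) (a (n + 1) + h (n + 1)), ∫⁻ y in Ioo l r,
          gagliardoIntegrand A ε x y :=
        ENNReal.tsum_le_tsum fun n =>
          (ofReal_rpow_le_lintegral_gagliardoIntegrand hε (hpos (n + 1)) (hIA (n + 1))
            (disjoint_Ioo_iUnion_Ioo_of_eq_add_two_mul hpos hstep n)).trans
          (lintegral_mono fun x => lintegral_mono_set (hgap n))
    _ = ∫⁻ x in ⋃ n, Ioo (a (n + 1)) (a (n + 1) + h (n + 1)), ∫⁻ y in Ioo l r,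
          gagliardoIntegrand A ε x y :=
        (lintegral_iUnion (fun _ => measurableSet_Ioo)
          ((pairwise_disjoint_Ioo_of_eq_add_two_mul hpos hstep).comp_of_injective
            Nat.succ_injective) _).symm
    _ ≤ _ := lintegral_mono_set (iUnion_subset fun n => (hIA (n + 1)).trans hsub)

theorem stmt_15_general (h a : ℕ → ℝ)
    (hh : ∀ n : ℕ, h n = 1 / (n * (Real.log n) ^ 2))
    (ha : ∀ n : ℕ, 4 ≤ n → a (n - 1) - a n = 2 * h n)
    (hA : (⋃ n : ℕ, ⋃ (_ : 3 ≤ n), Set.Ioo (a n) (a n + h n)) ⊆ Set.Ioo (0:ℝ) 3)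
    (ε : ℝ) (hε : 0 < ε) :
    (∫⁻ x in Set.Ioo (0:ℝ) 3, ∫⁻ y in Set.Ioo (0:ℝ) 3,
      ENNReal.ofReal
        (|Set.indicator (⋃ n : ℕ, ⋃ (_ : 3 ≤ n), Set.Ioo (a n) (a n + h n))
              (fun _ => (1:ℝ)) x -
            Set.indicator (⋃ n : ℕ, ⋃ (_ : 3 ≤ n), Set.Ioo (a n) (a n + h n))
              (fun _ => (1:ℝ)) y| / |x - y| ^ (1 + ε))) = ⊤ := by
  have hpos : ∀ n, 0 < h (n + 3) := fun n => by
    have : 0 < log ((n + 3 : ℕ) : ℝ) := log_pos (Nat.one_lt_cast.2 (by omega))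
    rw [hh]
    positivity
  have hstep : ∀ n, a (n + 3) = a (n + 3 + 1) + 2 * h (n + 3 + 1) := fun n => by
    have h4 := ha (n + 4) (by omega)
    rw [show n + 4 - 1 = n + 3 by omega] at h4
    linarith
  have hdiv : ¬ Summable fun n => h (n + 3) ^ (1 - ε) := by
    simp_rw [hh]
    exact fun hs => not_summable_one_div_mul_log_sq_rpow hε ((summable_nat_add_iff 3).1 hs)
  have hU : ⋃ n : ℕ, ⋃ (_ : 3 ≤ n), Ioo (a n) (a n + h n) =
      ⋃ n, Ioo (a (n + 3)) (a (n + 3) + h (n + 3)) :=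
    iUnion_ge_eq_iUnion_nat_add (fun n => Ioo (a n) (a n + h n)) 3
  rw [hU] at hA ⊢
  exact lintegral_gagliardoIntegrand_iUnion_Ioo_eq_top hpos hstep hA (by linarith) hdiv

/-- With `h_n = 1/(n (ln n)²)` and a decreasing sequence `a_n → 0` with
`a_{n-1} - a_n = 2h_n`, the set `A = ⋃_{n≥3} (a_n, a_n + h_n) ⊂ (0,3)` has infinite
Gagliardo `W^{ε,1}` seminorm on `(0,3)` for every `ε > 0`. -/
theorem stmt_15 (h a : ℕ → ℝ)
    (hh : ∀ n : ℕ, h n = 1 / (n * (Real.log n) ^ 2))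
    (ha : ∀ n : ℕ, 4 ≤ n → a (n - 1) - a n = 2 * h n)
    (hlim : Filter.Tendsto a Filter.atTop (nhds 0))
    (hA : (⋃ n : ℕ, ⋃ (_ : 3 ≤ n), Set.Ioo (a n) (a n + h n)) ⊆ Set.Ioo (0:ℝ) 3)
    (ε : ℝ) (hε : 0 < ε) :
    (∫⁻ x in Set.Ioo (0:ℝ) 3, ∫⁻ y in Set.Ioo (0:ℝ) 3,
      ENNReal.ofReal
        (|Set.indicator (⋃ n : ℕ, ⋃ (_ : 3 ≤ n), Set.Ioo (a n) (a n + h n))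
              (fun _ => (1:ℝ)) x -
            Set.indicator (⋃ n : ℕ, ⋃ (_ : 3 ≤ n), Set.Ioo (a n) (a n + h n))
              (fun _ => (1:ℝ)) y| / |x - y| ^ (1 + ε))) = ⊤ :=
  stmt_15_general h a hh ha hA ε hε
end
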